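/- arXiv:0805.0631 — 4 statements merged into one kernel-verified Lean document; each statement's English description precedes it below -/
import Mathlib

section
/- Let A₁, A₂ be real n×n matrices and B₁, B₂ real n×m matrices. Suppose F(x,u) = (ℓ₁x, ℓ₂x + ℓ₃u) is an invertible linear map of ℝⁿ×ℝᵐ (with ℓ₁ : ℝⁿ→ℝⁿ, ℓ₂ : ℝⁿ→ℝᵐ, ℓ₃ : ℝᵐ→ℝᵐ) that carries every solution-control pair of ẋ = A₁x + B₁u to a solution-control pair of ẏ = A₂y + B₂v via (y,v) = F(x,u). Then ℓ₁ and ℓ₃ are invertible, and setting O = ℓ₁⁻¹, Q = ℓ₃⁻¹, L = −ℓ₃⁻¹ℓ₂ℓ₁⁻¹ one has A₂ = O⁻¹A₁O + O⁻¹B₁L and B₂ = O⁻¹B₁Q. -/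
/-!
Every initial state `x₀` and control value `u₀` is attained at time `0` by some solution-control
pair (solve the augmented system for `(x, u)` with the matrix exponential). Differentiating the
transported solution at `t = 0` therefore gives, for all `x₀, u₀`,
`ℓ₁ (A₁ x₀ + B₁ u₀) = A₂ ℓ₁ x₀ + B₂ (ℓ₂ x₀ + ℓ₃ u₀)`, i.e. `ℓ₁ A₁ = A₂ ℓ₁ + B₂ ℓ₂` and
`ℓ₁ B₁ = B₂ ℓ₃`. Surjectivity of the triangular map makes `ℓ₁` and `ℓ₃` invertible, and solving
these two identities for `A₂` and `B₂` gives the feedback relations.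
-/

open Matrix

theorem ContinuousLinearMap.exists_forall_hasDerivAt_apply {𝕂 E : Type*} [RCLike 𝕂]
    [NormedAddCommGroup E] [NormedSpace 𝕂 E] [CompleteSpace E] (T : E →L[𝕂] E) (z₀ : E) :
    ∃ z : 𝕂 → E, z 0 = z₀ ∧ ∀ t, HasDerivAt z (T (z t)) t :=
  ⟨fun t => NormedSpace.exp (t • T) z₀, by simp, fun t => by
    simpa using (hasDerivAt_exp_smul_const' T t).clm_apply (hasDerivAt_const t z₀)⟩

theorem Matrix.exists_solution_control_pair {𝕂 ι κ : Type*} [RCLike 𝕂] [Fintype ι] [Fintype κ]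
    (A : Matrix ι ι 𝕂) (B : Matrix ι κ 𝕂) (x₀ : ι → 𝕂) (u₀ : κ → 𝕂) :
    ∃ (x : 𝕂 → ι → 𝕂) (u : 𝕂 → κ → 𝕂), Continuous u ∧ x 0 = x₀ ∧ u 0 = u₀ ∧
      ∀ t, HasDerivAt x (A *ᵥ x t + B *ᵥ u t) t := by
  -- the control is the second component of a solution of `ż = [[A, B], [0, 0]] z`
  obtain ⟨z, hz₀, hz⟩ := (LinearMap.toContinuousLinearMap (fromBlocks A B 0 0).mulVecLin
    ).exists_forall_hasDerivAt_apply (Sum.elim x₀ u₀)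
  have hzc : Continuous z := continuous_iff_continuousAt.2 fun t => (hz t).continuousAt
  refine ⟨fun t => z t ∘ Sum.inl, fun t => z t ∘ Sum.inr,
    continuous_pi fun j => (continuous_apply _).comp hzc, by simp [hz₀], by simp [hz₀],
    fun t => hasDerivAt_pi.2 fun i => ?_⟩
  simpa [fromBlocks_mulVec] using hasDerivAt_pi.1 (hz t) (Sum.inl i)

theorem Matrix.isUnit_of_surjective_triangular {R ι κ : Type*} [CommRing R]
    [Fintype ι] [DecidableEq ι] [Fintype κ] [DecidableEq κ]
    {ℓ₁ : Matrix ι ι R} {ℓ₂ : Matrix κ ι R} {ℓ₃ : Matrix κ κ R}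
    (h : Function.Surjective fun p : (ι → R) × (κ → R) => (ℓ₁ *ᵥ p.1, ℓ₂ *ᵥ p.1 + ℓ₃ *ᵥ p.2)) :
    IsUnit ℓ₁ ∧ IsUnit ℓ₃ := by
  have h₁ : IsUnit ℓ₁ := mulVec_surjective_iff_isUnit.1 fun y =>
    let ⟨p, hp⟩ := h (y, 0); ⟨p.1, congrArg Prod.fst hp⟩
  refine ⟨h₁, mulVec_surjective_iff_isUnit.1 fun w => ?_⟩
  obtain ⟨⟨x, u⟩, hp⟩ := h (0, w)
  obtain ⟨hx, hu⟩ := Prod.ext_iff.1 hp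
  obtain rfl : x = 0 := mulVec_injective_of_isUnit h₁ (by simpa using hx)
  exact ⟨u, by simpa using hu⟩

theorem Matrix.mul_eq_of_transport {ι κ : Type*} [Fintype ι] [Fintype κ]
    {A₁ A₂ : Matrix ι ι ℝ} {B₁ B₂ : Matrix ι κ ℝ}
    {ℓ₁ : Matrix ι ι ℝ} {ℓ₂ : Matrix κ ι ℝ} {ℓ₃ : Matrix κ κ ℝ}
    (htrans : ∀ (x : ℝ → ι → ℝ) (u : ℝ → κ → ℝ), Continuous u →
      (∀ t : ℝ, 0 ≤ t → HasDerivAt x (A₁ *ᵥ x t + B₁ *ᵥ u t) t) →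
        HasDerivAt (fun s => ℓ₁ *ᵥ x s) (A₂ *ᵥ (ℓ₁ *ᵥ x 0) + B₂ *ᵥ (ℓ₂ *ᵥ x 0 + ℓ₃ *ᵥ u 0)) 0) :
    ℓ₁ * A₁ = A₂ * ℓ₁ + B₂ * ℓ₂ ∧ ℓ₁ * B₁ = B₂ * ℓ₃ := by
  have key : ∀ x₀ u₀, ℓ₁ *ᵥ (A₁ *ᵥ x₀ + B₁ *ᵥ u₀) =
      A₂ *ᵥ (ℓ₁ *ᵥ x₀) + B₂ *ᵥ (ℓ₂ *ᵥ x₀ + ℓ₃ *ᵥ u₀) := by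
    intro x₀ u₀
    obtain ⟨x, u, hu, rfl, rfl, hx⟩ := exists_solution_control_pair A₁ B₁ x₀ u₀
    have hℓx : HasDerivAt (fun s => ℓ₁ *ᵥ x s) (ℓ₁ *ᵥ (A₁ *ᵥ x 0 + B₁ *ᵥ u 0)) 0 :=
      (LinearMap.toContinuousLinearMap ℓ₁.mulVecLin).hasFDerivAt.comp_hasDerivAt 0 (hx 0)
    exact hℓx.unique (htrans x u hu fun t _ => hx t)
  constructor <;> refine ext_iff_mulVec.2 fun v => ?_
  · simpa [mulVec_mulVec, add_mulVec] using key v 0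
  · simpa [mulVec_mulVec, add_mulVec] using key 0 v

theorem Matrix.feedback_eq_of_mul_eq {R ι κ : Type*} [CommRing R]
    [Fintype ι] [DecidableEq ι] [Fintype κ] [DecidableEq κ]
    {A₁ A₂ : Matrix ι ι R} {B₁ B₂ : Matrix ι κ R}
    {ℓ₁ : Matrix ι ι R} {ℓ₂ : Matrix κ ι R} {ℓ₃ : Matrix κ κ R}
    (h₁ : IsUnit ℓ₁) (h₃ : IsUnit ℓ₃)
    (hA : ℓ₁ * A₁ = A₂ * ℓ₁ + B₂ * ℓ₂) (hB : ℓ₁ * B₁ = B₂ * ℓ₃) :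
    A₂ = ℓ₁ * A₁ * ℓ₁⁻¹ + ℓ₁ * B₁ * -(ℓ₃⁻¹ * ℓ₂ * ℓ₁⁻¹) ∧ B₂ = ℓ₁ * B₁ * ℓ₃⁻¹ := by
  rw [isUnit_iff_isUnit_det] at h₁ h₃
  have hB₂ : B₂ = ℓ₁ * B₁ * ℓ₃⁻¹ := by rw [hB, mul_nonsing_inv_cancel_right _ _ h₃]
  refine ⟨?_, hB₂⟩
  calc A₂ = (A₂ * ℓ₁ + B₂ * ℓ₂) * ℓ₁⁻¹ - B₂ * ℓ₂ * ℓ₁⁻¹ := by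
        rw [Matrix.add_mul, mul_nonsing_inv_cancel_right _ _ h₁, add_sub_cancel_right]
    _ = ℓ₁ * A₁ * ℓ₁⁻¹ + ℓ₁ * B₁ * -(ℓ₃⁻¹ * ℓ₂ * ℓ₁⁻¹) := by
        rw [← hA, hB₂, Matrix.mul_neg, ← sub_eq_add_neg]
        simp only [Matrix.mul_assoc]

/-- a triangular invertible linear map transporting all solution-control
pairs forces the feedback-equivalence matrix relations. -/
theorem stmt_1 (n m : ℕ)
    (A₁ A₂ : Matrix (Fin n) (Fin n) ℝ) (B₁ B₂ : Matrix (Fin n) (Fin m) ℝ)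
    (ℓ₁ : Matrix (Fin n) (Fin n) ℝ) (ℓ₂ : Matrix (Fin m) (Fin n) ℝ)
    (ℓ₃ : Matrix (Fin m) (Fin m) ℝ)
    (hbij : Function.Bijective (fun p : (Fin n → ℝ) × (Fin m → ℝ) =>
      (ℓ₁.mulVec p.1, ℓ₂.mulVec p.1 + ℓ₃.mulVec p.2)))
    (htrans : ∀ (x : ℝ → Fin n → ℝ) (u : ℝ → Fin m → ℝ), Continuous u →
      (∀ t : ℝ, 0 ≤ t → HasDerivAt x (A₁.mulVec (x t) + B₁.mulVec (u t)) t) →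
      ∀ t : ℝ, 0 ≤ t →
        HasDerivAt (fun s => ℓ₁.mulVec (x s))
          (A₂.mulVec (ℓ₁.mulVec (x t)) +
            B₂.mulVec (ℓ₂.mulVec (x t) + ℓ₃.mulVec (u t))) t) :
    IsUnit ℓ₁ ∧ IsUnit ℓ₃ ∧
    ∃ (O : Matrix (Fin n) (Fin n) ℝ) (Q : Matrix (Fin m) (Fin m) ℝ)
      (L : Matrix (Fin m) (Fin n) ℝ),
      O = ℓ₁⁻¹ ∧ Q = ℓ₃⁻¹ ∧ L = -(ℓ₃⁻¹ * ℓ₂ * ℓ₁⁻¹) ∧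
      A₂ = O⁻¹ * A₁ * O + O⁻¹ * B₁ * L ∧ B₂ = O⁻¹ * B₁ * Q := by
  obtain ⟨h₁, h₃⟩ := isUnit_of_surjective_triangular hbij.2
  obtain ⟨hA, hB⟩ := mul_eq_of_transport fun x u hu hx => htrans x u hu hx 0 le_rfl
  refine ⟨h₁, h₃, ℓ₁⁻¹, ℓ₃⁻¹, _, rfl, rfl, rfl, ?_⟩
  rw [nonsing_inv_nonsing_inv ℓ₁ ((isUnit_iff_isUnit_det ℓ₁).1 h₁)]
  exact feedback_eq_of_mul_eq h₁ h₃ hA hB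
end

section
/- Suppose F(x,u) = (H(x,u), G(x,u)) is a C¹ diffeomorphism of ℝⁿ×ℝᵐ carrying solution-control pairs of ẋ = A₁x + B₁u to those of ẏ = A₂y + B₂v, with H independent of u. Writing D_xH(0) for the derivative of H at 0 in x, and D_xG(0,0), D_uG(0,0) for the partial derivatives of G at (0,0), the following identities hold: D_xH(0)·A₁ = A₂·D_xH(0) + B₂·D_xG(0,0) and D_xH(0)·B₁ = B₂·D_uG(0,0). -/
/-!
Every point `(x₀, u₀)` is the initial value of a solution-control pair of the first system
(constant control `u₀`), so the chain rule along it gives the pointwise identity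
`DH(x₀)(A₁x₀ + B₁u₀) = A₂H(x₀) + B₂G(x₀,u₀)`. Differentiating it in `x₀` at `u₀ = 0` gives the
first identity: since `A₁0 = 0`, the derivative of `x ↦ DH(x)(A₁x)` at `0` only needs `DH` to be
continuous, which is where `F ∈ C¹` enters. Setting `x₀ = 0` and differentiating in `u₀` gives
the second.
-/

open Matrix Filter Asymptotics Topology NormedSpace

theorem ContinuousAt.hasFDerivAt_zero_apply {𝕜 E E' F : Type*} [NontriviallyNormedField 𝕜]
    [NormedAddCommGroup E] [NormedSpace 𝕜 E] [NormedAddCommGroup E'] [NormedSpace 𝕜 E']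
    [NormedAddCommGroup F] [NormedSpace 𝕜 F] {f : E → E' →L[𝕜] F} (hf : ContinuousAt f 0)
    (L : E →L[𝕜] E') :
    HasFDerivAt (fun x => f x (L x)) ((f 0).comp L) 0 := by
  rw [hasFDerivAt_iff_isLittleO_nhds_zero]
  simp only [zero_add, map_zero, sub_zero, ContinuousLinearMap.comp_apply,
    ← _root_.sub_apply]
  have hsmall : (fun h => f h - f 0) =o[𝓝 0] (fun _ => (1 : ℝ)) :=
    (isLittleO_one_iff ℝ).2 (tendsto_sub_nhds_zero_iff.2 hf)
  have hprod : (fun h => ‖f h - f 0‖ * ‖L h‖) =o[𝓝 0] (fun h => h) :=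
    isLittleO_norm_right.1 (by simpa using hsmall.norm_norm.mul_isBigO (L.isBigO_id _).norm_norm)
  refine (IsBigO.of_bound 1 (Eventually.of_forall fun h => ?_)).trans_isLittleO hprod
  simpa using (f h - f 0).le_opNorm (L h)

namespace Matrix

variable {𝕜 ι κ : Type*} [NontriviallyNormedField 𝕜] [CompleteSpace 𝕜] [Fintype κ]

def mulVecCLM (A : Matrix ι κ 𝕜) : (κ → 𝕜) →L[𝕜] (ι → 𝕜) :=
  LinearMap.toContinuousLinearMap A.mulVecLin

@[simp]
theorem mulVecCLM_apply (A : Matrix ι κ 𝕜) (v : κ → 𝕜) : A.mulVecCLM v = A *ᵥ v := rfl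

end Matrix

theorem HasFDerivAt.matrix_mulVec {𝕜 ι κ E : Type*} [NontriviallyNormedField 𝕜] [CompleteSpace 𝕜]
    [Fintype ι] [Fintype κ] [NormedAddCommGroup E] [NormedSpace 𝕜 E] (A : Matrix ι κ 𝕜)
    {f : E → κ → 𝕜} {f' : E →L[𝕜] κ → 𝕜} {x : E} (hf : HasFDerivAt f f' x) :
    HasFDerivAt (fun y => A *ᵥ f y) (A.mulVecCLM.comp f') x :=
  A.mulVecCLM.hasFDerivAt.comp x hf

section LinearSystem

variable {ι κ : Type*} [Fintype ι] [Fintype κ] [DecidableEq ι] [DecidableEq κ]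

open scoped Matrix.Norms.Operator in
theorem hasDerivAt_exp_smul_mulVec (M : Matrix ι ι ℝ) (z₀ : ι → ℝ) (t : ℝ) :
    HasDerivAt (fun s : ℝ => exp (s • M) *ᵥ z₀) (M *ᵥ (exp (t • M) *ᵥ z₀)) t := by
  let applyTo : Matrix ι ι ℝ →L[ℝ] (ι → ℝ) :=
    LinearMap.toContinuousLinearMap ((mulVecBilin ℝ ℝ).flip z₀)
  exact (applyTo.hasFDerivAt.comp_hasDerivAt t (hasDerivAt_exp_smul_const' M t)).congr_deriv
    (by simp only [mulVec_mulVec]; rfl)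

theorem exists_hasDerivAt_mulVec_add_mulVec_const (A : Matrix ι ι ℝ) (B : Matrix ι κ ℝ)
    (x₀ : ι → ℝ) (u₀ : κ → ℝ) :
    ∃ x : ℝ → ι → ℝ, x 0 = x₀ ∧ ∀ t, HasDerivAt x (A *ᵥ x t + B *ᵥ u₀) t := by
  -- carry the control as extra state with zero derivative, and solve `ż = M z` by `exp (t • M)`
  set M : Matrix (ι ⊕ κ) (ι ⊕ κ) ℝ := fromBlocks A B 0 0
  set z : ℝ → ι ⊕ κ → ℝ := fun t => exp (t • M) *ᵥ Sum.elim x₀ u₀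
  have hz : ∀ t, HasDerivAt z (M *ᵥ z t) t := hasDerivAt_exp_smul_mulVec M _
  have hMz : ∀ t, M *ᵥ z t = Sum.elim (A *ᵥ (z t ∘ Sum.inl) + B *ᵥ (z t ∘ Sum.inr)) 0 := by
    intro t
    simp only [M, fromBlocks_mulVec, zero_mulVec, add_zero]
  have hz0 : z 0 = Sum.elim x₀ u₀ := by simp [z]
  have hu : ∀ t, z t ∘ Sum.inr = u₀ := by
    intro t
    ext i
    have hzi : ∀ s, HasDerivAt (fun s => z s (Sum.inr i)) 0 s := fun s => by
      simpa [hMz] using hasDerivAt_pi.1 (hz s) (Sum.inr i)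
    simpa [hz0] using is_const_of_deriv_eq_zero (fun s => (hzi s).differentiableAt)
      (fun s => (hzi s).deriv) t 0
  refine ⟨fun t => z t ∘ Sum.inl, by simp [hz0], fun t => hasDerivAt_pi.2 fun i => ?_⟩
  simpa [hMz, hu] using hasDerivAt_pi.1 (hz t) (Sum.inl i)

theorem fderiv_mulVec_add_mulVec_eq_of_forall_solution {F : Type*} [NormedAddCommGroup F]
    [NormedSpace ℝ F] {A : Matrix ι ι ℝ} {B : Matrix ι κ ℝ} {H : (ι → ℝ) → F}
    {Φ : (ι → ℝ) → (κ → ℝ) → F}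
    (htrans : ∀ (x : ℝ → ι → ℝ) (u : ℝ → κ → ℝ), Continuous u →
      (∀ t : ℝ, 0 ≤ t → HasDerivAt x (A *ᵥ x t + B *ᵥ u t) t) →
      ∀ t : ℝ, 0 ≤ t → HasDerivAt (fun s => H (x s)) (Φ (x t) (u t)) t)
    {x₀ : ι → ℝ} (hH : DifferentiableAt ℝ H x₀) (u₀ : κ → ℝ) :
    fderiv ℝ H x₀ (A *ᵥ x₀ + B *ᵥ u₀) = Φ x₀ u₀ := by
  obtain ⟨x, hx0, hx⟩ := exists_hasDerivAt_mulVec_add_mulVec_const A B x₀ u₀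
  have hchain := hH.hasFDerivAt.comp_hasDerivAt_of_eq 0 (hx 0) hx0.symm
  have htransported := htrans x (fun _ => u₀) continuous_const (fun t _ => hx t) 0 le_rfl
  simpa [hx0] using hchain.unique htransported

end LinearSystem

theorem stmt_8_general (n m : ℕ)
    (A₁ A₂ : Matrix (Fin n) (Fin n) ℝ) (B₁ B₂ : Matrix (Fin n) (Fin m) ℝ)
    (H : (Fin n → ℝ) → (Fin n → ℝ))
    (G : (Fin n → ℝ) → (Fin m → ℝ) → (Fin m → ℝ))
    (hF : ContDiff ℝ 1 (fun p : (Fin n → ℝ) × (Fin m → ℝ) => (H p.1, G p.1 p.2)))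
    (hH0 : H 0 = 0)
    (htrans : ∀ (x : ℝ → Fin n → ℝ) (u : ℝ → Fin m → ℝ), Continuous u →
      (∀ t : ℝ, 0 ≤ t → HasDerivAt x (A₁.mulVec (x t) + B₁.mulVec (u t)) t) →
      ∀ t : ℝ, 0 ≤ t →
        HasDerivAt (fun s => H (x s))
          (A₂.mulVec (H (x t)) + B₂.mulVec (G (x t) (u t))) t) :
    (∀ w : Fin n → ℝ,
      fderiv ℝ H 0 (A₁.mulVec w) =
        A₂.mulVec (fderiv ℝ H 0 w) + B₂.mulVec (fderiv ℝ (fun x => G x 0) 0 w)) ∧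
    (∀ w : Fin m → ℝ,
      fderiv ℝ H 0 (B₁.mulVec w) = B₂.mulVec (fderiv ℝ (fun v => G 0 v) 0 w)) := by
  have hH : ContDiff ℝ 1 H :=
    hF.fst.comp (contDiff_id.prodMk (contDiff_const (c := (0 : Fin m → ℝ))))
  have hHd : Differentiable ℝ H := hH.differentiable one_ne_zero
  have hGx : DifferentiableAt ℝ (fun x => G x 0) 0 :=
    (hF.snd.comp (contDiff_id.prodMk contDiff_const)).differentiable one_ne_zero 0
  have hGu : DifferentiableAt ℝ (fun v => G 0 v) 0 :=
    (hF.snd.comp (contDiff_const.prodMk contDiff_id)).differentiable one_ne_zero 0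
  have key : ∀ x₀ u₀, fderiv ℝ H x₀ (A₁ *ᵥ x₀ + B₁ *ᵥ u₀) = A₂ *ᵥ H x₀ + B₂ *ᵥ G x₀ u₀ :=
    fun x₀ u₀ => fderiv_mulVec_add_mulVec_eq_of_forall_solution
      (Φ := fun x u => A₂ *ᵥ H x + B₂ *ᵥ G x u) htrans (hHd x₀) u₀
  constructor
  · have hfun : (fun x => fderiv ℝ H x (A₁.mulVecCLM x)) = fun x => A₂ *ᵥ H x + B₂ *ᵥ G x 0 :=
      funext fun x => by simpa using key x 0
    have hL := (hH.continuous_fderiv one_ne_zero).continuousAt.hasFDerivAt_zero_apply A₁.mulVecCLM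
    have hR := ((hHd 0).hasFDerivAt.matrix_mulVec A₂).add (hGx.hasFDerivAt.matrix_mulVec B₂)
    rw [hfun] at hL
    intro w
    simpa using congr($(hL.unique hR) w)
  · have hfun : ⇑((fderiv ℝ H 0).comp B₁.mulVecCLM) = fun v => B₂ *ᵥ G 0 v :=
      funext fun v => by simpa [hH0] using key 0 v
    have hL := ((fderiv ℝ H 0).comp B₁.mulVecCLM).hasFDerivAt (x := 0)
    have hR := hGu.hasFDerivAt.matrix_mulVec B₂
    rw [hfun] at hL
    intro w
    simpa using congr($(hL.unique hR) w)

/-- the derivative identities satisfied by a C¹ equivalence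
transformation `F(x,u) = (H(x), G(x,u))` between two linear controlled systems. -/
theorem stmt_8 (n m : ℕ)
    (A₁ A₂ : Matrix (Fin n) (Fin n) ℝ) (B₁ B₂ : Matrix (Fin n) (Fin m) ℝ)
    (H : (Fin n → ℝ) → (Fin n → ℝ))
    (G : (Fin n → ℝ) → (Fin m → ℝ) → (Fin m → ℝ))
    (hF : ContDiff ℝ 1 (fun p : (Fin n → ℝ) × (Fin m → ℝ) => (H p.1, G p.1 p.2)))
    (hdiffeo : ∃ Finv : (Fin n → ℝ) × (Fin m → ℝ) → (Fin n → ℝ) × (Fin m → ℝ),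
      ContDiff ℝ 1 Finv ∧
      Function.LeftInverse Finv (fun p : (Fin n → ℝ) × (Fin m → ℝ) => (H p.1, G p.1 p.2)) ∧
      Function.RightInverse Finv (fun p : (Fin n → ℝ) × (Fin m → ℝ) => (H p.1, G p.1 p.2)))
    (hH0 : H 0 = 0) (hG0 : G 0 0 = 0)
    (htrans : ∀ (x : ℝ → Fin n → ℝ) (u : ℝ → Fin m → ℝ), Continuous u →
      (∀ t : ℝ, 0 ≤ t → HasDerivAt x (A₁.mulVec (x t) + B₁.mulVec (u t)) t) →
      ∀ t : ℝ, 0 ≤ t →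
        HasDerivAt (fun s => H (x s))
          (A₂.mulVec (H (x t)) + B₂.mulVec (G (x t) (u t))) t) :
    (∀ w : Fin n → ℝ,
      fderiv ℝ H 0 (A₁.mulVec w) =
        A₂.mulVec (fderiv ℝ H 0 w) + B₂.mulVec (fderiv ℝ (fun x => G x 0) 0 w)) ∧
    (∀ w : Fin m → ℝ,
      fderiv ℝ H 0 (B₁.mulVec w) = B₂.mulVec (fderiv ℝ (fun v => G 0 v) 0 w)) :=
  stmt_8_general n m A₁ A₂ B₁ B₂ H G hF hH0 htrans
end

section
/- Differential equivalence implies linear equivalence for linear controlled systems: if there is a C¹ diffeomorphism F(x,u) = (H(x), G(x,u)) of ℝⁿ×ℝᵐ with F(0,0)=(0,0) carrying every solution-control pair of ẋ = A₁x + B₁u (with continuous control) to a solution-control pair of ẏ = A₂y + B₂v via (y,v) = F(x,u), then there exist invertible matrices O, Q and a matrix L with A₂ = O⁻¹A₁O + O⁻¹B₁L and B₂ = O⁻¹B₁Q; indeed one may take O = D_xH(0)⁻¹, Q = D_uG(0,0)⁻¹ up to the relation A₁ = D_xH(0)⁻¹A₂D_xH(0) + D_xH(0)⁻¹B₂D_xG(0,0),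 B₁ = D_xH(0)⁻¹B₂D_uG(0,0). -/
/-!
Along the trajectory of the first system with constant control `u₀` starting at `x₀`, the chain
rule and the hypothesis give the pointwise identity
`DH(x₀) (A₁ x₀ + B₁ u₀) = A₂ H(x₀) + B₂ G(x₀, u₀)` for all `x₀, u₀`.
Differentiating it at the origin, in `x₀` with `u₀ = 0` and in `u₀` with `x₀ = 0`, gives
`DH(0) A₁ = A₂ DH(0) + B₂ D_xG(0,0)` and `DH(0) B₁ = B₂ D_uG(0,0)`.
Since `DF(0,0)` is invertible and block triangular, `DH(0)` and `D_uG(0,0)` are invertible, and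
the feedback relations follow by matrix algebra.
-/

open Matrix Asymptotics Topology Function NormedSpace

theorem exists_forall_hasDerivAt_apply_add_const {E : Type*} [NormedAddCommGroup E]
    [NormedSpace ℝ E] [CompleteSpace E] (A : E →L[ℝ] E) (b x₀ : E) :
    ∃ x : ℝ → E, x 0 = x₀ ∧ ∀ t, HasDerivAt x (A (x t) + b) t := by
  -- the `exp` API is stated for `ℚ`-normed algebras
  let +nondep : NormedAlgebra ℚ (E →L[ℝ] E) := .restrictScalars ℚ ℝ _
  have hint : Continuous fun s : ℝ => exp (-s • A) b := by fun_prop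
  -- variation of constants
  refine ⟨fun t => exp (t • A) (x₀ + ∫ s in (0 : ℝ)..t, exp (-s • A) b), by simp, fun t => ?_⟩
  have hy : HasDerivAt (fun t => x₀ + ∫ s in (0 : ℝ)..t, exp (-s • A) b) (exp (-t • A) b) t :=
    (hint.integral_hasStrictDerivAt 0 t).hasDerivAt.const_add x₀
  have hinv : exp (t • A) * exp (-t • A) = 1 := by
    rw [← exp_add_of_commute (((Commute.refl A).smul_left t).smul_right (-t)), neg_smul,
      add_neg_cancel, exp_zero]
  convert (hasDerivAt_exp_smul_const' A t).clm_apply hy using 1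
  rw [mul_apply_eq_comp, ← mul_apply_eq_comp (exp (t • A)), hinv, one_apply_eq_self]

theorem HasFDerivAt.clm_apply_of_continuousAt_of_eq_zero {𝕜 E F G : Type*}
    [NontriviallyNormedField 𝕜] [NormedAddCommGroup E] [NormedSpace 𝕜 E]
    [NormedAddCommGroup F] [NormedSpace 𝕜 F] [NormedAddCommGroup G] [NormedSpace 𝕜 G]
    {f : E → F →L[𝕜] G} {g : E → F} {g' : E →L[𝕜] F} {x₀ : E}
    (hf : ContinuousAt f x₀) (hg : HasFDerivAt g g' x₀) (hg₀ : g x₀ = 0) :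
    HasFDerivAt (fun x => f x (g x)) ((f x₀).comp g') x₀ := by
  have hf' : (fun x => f x - f x₀) =o[𝓝 x₀] (fun _ => (1 : ℝ)) :=
    (isLittleO_one_iff ℝ).2 (by simpa using hf.sub_const (f x₀))
  have hg' : g =O[𝓝 x₀] (· - x₀) := by simpa [hg₀] using hg.isBigO_sub
  -- the remainder is `o(1) · O(x - x₀)`
  have hrem : HasFDerivAt (fun x => (f x - f x₀) (g x)) (0 : E →L[𝕜] G) x₀ := by
    rw [hasFDerivAt_iff_isLittleO]
    have := isBoundedBilinearMap_apply.isBigO_comp.trans_isLittleO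
      (hf'.norm_norm.mul_isBigO hg'.norm_norm)
    simpa [hg₀] using this
  convert ((f x₀).hasFDerivAt.comp x₀ hg).add hrem using 1
  · ext x
    simp
  · simp

theorem bijective_fderiv_of_leftInverse_of_rightInverse {𝕜 E F : Type*}
    [NontriviallyNormedField 𝕜] [NormedAddCommGroup E] [NormedSpace 𝕜 E]
    [NormedAddCommGroup F] [NormedSpace 𝕜 F] {f : E → F} {g : F → E} {x : E}
    (hf : DifferentiableAt 𝕜 f x) (hg : DifferentiableAt 𝕜 g (f x))
    (hl : LeftInverse g f) (hr : RightInverse g f) :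
    Bijective (fderiv 𝕜 f x) := by
  have hgf : (fderiv 𝕜 g (f x)).comp (fderiv 𝕜 f x) = .id 𝕜 E := by
    rw [← fderiv_comp x hg hf, hl.comp_eq_id, fderiv_id]
  have hfg : (fderiv 𝕜 f x).comp (fderiv 𝕜 g (f x)) = .id 𝕜 F := by
    have hcomp := fderiv_comp (f x) ((hl x).symm ▸ hf : DifferentiableAt 𝕜 f (g (f x))) hg
    rw [hl x, hr.comp_eq_id, fderiv_id] at hcomp
    exact hcomp.symm
  exact ⟨LeftInverse.injective (g := fderiv 𝕜 g (f x)) (DFunLike.congr_fun hgf),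
    fun y => ⟨_, DFunLike.congr_fun hfg y⟩⟩

theorem bijective_fderiv_of_bijective_fderiv_prodMk {𝕜 E U : Type*}
    [NontriviallyNormedField 𝕜] [NormedAddCommGroup E] [NormedSpace 𝕜 E] [FiniteDimensional 𝕜 E]
    [NormedAddCommGroup U] [NormedSpace 𝕜 U] [FiniteDimensional 𝕜 U]
    {H : E → E} {G : E → U → U} {x : E} {u : U}
    (hH : DifferentiableAt 𝕜 H x) (hG : DifferentiableAt 𝕜 (fun p : E × U => G p.1 p.2) (x, u))
    (hbij : Bijective (fderiv 𝕜 (fun p : E × U => (H p.1, G p.1 p.2)) (x, u))) :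
    Bijective (fderiv 𝕜 H x) ∧ Bijective (fderiv 𝕜 (G x) u) := by
  set DG := fderiv 𝕜 (fun p : E × U => G p.1 p.2) (x, u)
  have hDF : ∀ p, fderiv 𝕜 (fun p : E × U => (H p.1, G p.1 p.2)) (x, u) p
      = (fderiv 𝕜 H x p.1, DG p) := by
    have hFd : HasFDerivAt (fun p : E × U => (H p.1, G p.1 p.2))
        (((fderiv 𝕜 H x).comp (.fst 𝕜 E U)).prod DG) (x, u) :=
      (hH.hasFDerivAt.comp (x, u) hasFDerivAt_fst).prodMk hG.hasFDerivAt
    rw [hFd.fderiv]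
    exact fun p => rfl
  have hDGu : ∀ v, fderiv 𝕜 (G x) u v = DG (0, v) := by
    have hGd : HasFDerivAt (G x) (DG.comp (.inr 𝕜 E U)) u :=
      hG.hasFDerivAt.comp u (hasFDerivAt_prodMk_right x u)
    rw [hGd.fderiv]
    exact fun v => rfl
  have hsurj : Surjective (fderiv 𝕜 H x) := fun y => by
    obtain ⟨p, hp⟩ := hbij.2 (y, 0)
    exact ⟨p.1, by simpa [hDF] using congrArg Prod.fst hp⟩
  have hinj : Injective (fderiv 𝕜 (G x) u) := by
    refine (injective_iff_map_eq_zero _).2 fun v hv => ?_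
    have h0 : fderiv 𝕜 (fun p : E × U => (H p.1, G p.1 p.2)) (x, u) (0, v) = 0 := by
      rw [hDF, ← hDGu, hv, map_zero]
      rfl
    simpa using hbij.1 (h0.trans (map_zero _).symm)
  exact ⟨⟨(LinearMap.injective_iff_surjective (f := (fderiv 𝕜 H x : E →ₗ[𝕜] E))).2 hsurj, hsurj⟩,
    ⟨hinj, (LinearMap.injective_iff_surjective (f := (fderiv 𝕜 (G x) u : U →ₗ[𝕜] U))).1 hinj⟩⟩

section Linearization

variable {𝕜 E U : Type*} [NontriviallyNormedField 𝕜] [NormedAddCommGroup E] [NormedSpace 𝕜 E]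
  [NormedAddCommGroup U] [NormedSpace 𝕜 U] {H : E → E} {G : E → U → U}
  {A A' : E →L[𝕜] E} {B B' : U →L[𝕜] E}

theorem fderiv_comp_drift_eq_of_forall_fderiv_apply_eq
    (hrel : ∀ x u, fderiv 𝕜 H x (A x + B u) = A' (H x) + B' (G x u))
    (hH : ContDiffAt 𝕜 1 H 0) (hG : DifferentiableAt 𝕜 (fun x => G x 0) 0) :
    (fderiv 𝕜 H 0).comp A = A'.comp (fderiv 𝕜 H 0) + B'.comp (fderiv 𝕜 (fun x => G x 0) 0) := by
  have hlhs : HasFDerivAt (fun x => fderiv 𝕜 H x (A x)) ((fderiv 𝕜 H 0).comp A) 0 :=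
    .clm_apply_of_continuousAt_of_eq_zero (hH.continuousAt_fderiv one_ne_zero) A.hasFDerivAt
      (map_zero A)
  have hrhs : HasFDerivAt (fun x => A' (H x) + B' (G x 0))
      (A'.comp (fderiv 𝕜 H 0) + B'.comp (fderiv 𝕜 (fun x => G x 0) 0)) 0 :=
    (A'.hasFDerivAt.comp 0 (hH.differentiableAt one_ne_zero).hasFDerivAt).add
      (B'.hasFDerivAt.comp 0 hG.hasFDerivAt)
  exact hlhs.unique (hrhs.congr_of_eventuallyEq (.of_forall fun x => by simpa using hrel x 0))

theorem fderiv_comp_input_eq_of_forall_fderiv_apply_eq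
    (hrel : ∀ x u, fderiv 𝕜 H x (A x + B u) = A' (H x) + B' (G x u))
    (hG : DifferentiableAt 𝕜 (G 0) 0) :
    (fderiv 𝕜 H 0).comp B = B'.comp (fderiv 𝕜 (G 0) 0) := by
  have hrhs : HasFDerivAt (fun u => A' (H 0) + B' (G 0 u)) (B'.comp (fderiv 𝕜 (G 0) 0)) 0 :=
    (B'.hasFDerivAt.comp 0 hG.hasFDerivAt).const_add _
  exact ((fderiv 𝕜 H 0).comp B).hasFDerivAt.unique
    (hrhs.congr_of_eventuallyEq (.of_forall fun u => by simpa using hrel 0 u))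

end Linearization

section FeedbackAlgebra

variable {ι κ R : Type*} [Fintype ι] [DecidableEq ι] [Fintype κ] [CommRing R]
  {A₁ A₂ P : Matrix ι ι R} {B₁ B₂ : Matrix ι κ R} {K : Matrix κ ι R} {S : Matrix κ κ R}

theorem Matrix.eq_inv_mul_of_mul_eq (hP : IsUnit P) (hA : P * A₁ = A₂ * P + B₂ * K)
    (hB : P * B₁ = B₂ * S) : A₁ = P⁻¹ * A₂ * P + P⁻¹ * B₂ * K ∧ B₁ = P⁻¹ * B₂ * S := by
  have := hP.invertible
  constructor
  · rw [Matrix.mul_assoc P⁻¹ A₂, Matrix.mul_assoc P⁻¹ B₂, ← Matrix.mul_add, ← hA,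
      inv_mul_cancel_left_of_invertible]
  · rw [Matrix.mul_assoc, ← hB, inv_mul_cancel_left_of_invertible]

theorem Matrix.exists_feedback_of_mul_eq [DecidableEq κ] (hP : IsUnit P) (hS : IsUnit S)
    (hA : P * A₁ = A₂ * P + B₂ * K) (hB : P * B₁ = B₂ * S) :
    ∃ (O : Matrix ι ι R) (Q : Matrix κ κ R) (L : Matrix κ ι R), IsUnit O ∧ IsUnit Q ∧
      A₂ = O⁻¹ * A₁ * O + O⁻¹ * B₁ * L ∧ B₂ = O⁻¹ * B₁ * Q := by
  have := hP.invertible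
  have := hS.invertible
  refine ⟨P⁻¹, S⁻¹, -(S⁻¹ * K * P⁻¹), isUnit_nonsing_inv_iff.2 hP, isUnit_nonsing_inv_iff.2 hS,
    ?_, ?_⟩
  · rw [inv_inv_of_invertible, hA, hB]
    simp only [Matrix.add_mul, Matrix.mul_neg, Matrix.mul_assoc, mul_inv_of_invertible,
      mul_inv_cancel_left_of_invertible, Matrix.mul_one, add_neg_cancel_right]
  · rw [inv_inv_of_invertible, hB, Matrix.mul_assoc, mul_inv_of_invertible, Matrix.mul_one]

end FeedbackAlgebra

section LinearControlSystem

variable {n m : ℕ}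

def CarriesSolutions (A₁ : Matrix (Fin n) (Fin n) ℝ) (B₁ : Matrix (Fin n) (Fin m) ℝ)
    (A₂ : Matrix (Fin n) (Fin n) ℝ) (B₂ : Matrix (Fin n) (Fin m) ℝ)
    (H : (Fin n → ℝ) → (Fin n → ℝ)) (G : (Fin n → ℝ) → (Fin m → ℝ) → (Fin m → ℝ)) : Prop :=
  ∀ (x : ℝ → Fin n → ℝ) (u : ℝ → Fin m → ℝ), Continuous u →
    (∀ t : ℝ, 0 ≤ t → HasDerivAt x (A₁ *ᵥ x t + B₁ *ᵥ u t) t) →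
    ∀ t : ℝ, 0 ≤ t → HasDerivAt (fun s => H (x s)) (A₂ *ᵥ H (x t) + B₂ *ᵥ G (x t) (u t)) t

variable {A₁ A₂ : Matrix (Fin n) (Fin n) ℝ} {B₁ B₂ : Matrix (Fin n) (Fin m) ℝ}
  {H : (Fin n → ℝ) → (Fin n → ℝ)} {G : (Fin n → ℝ) → (Fin m → ℝ) → (Fin m → ℝ)}

theorem CarriesSolutions.fderiv_apply_eq (h : CarriesSolutions A₁ B₁ A₂ B₂ H G)
    (hH : Differentiable ℝ H) (x₀ : Fin n → ℝ) (u₀ : Fin m → ℝ) :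
    fderiv ℝ H x₀ (A₁ *ᵥ x₀ + B₁ *ᵥ u₀) = A₂ *ᵥ H x₀ + B₂ *ᵥ G x₀ u₀ := by
  obtain ⟨x, hx₀, hx⟩ := exists_forall_hasDerivAt_apply_add_const
    (LinearMap.toContinuousLinearMap (toLin' A₁)) (B₁ *ᵥ u₀) x₀
  have hx' : ∀ t, HasDerivAt x (A₁ *ᵥ x t + B₁ *ᵥ u₀) t := by simpa using hx
  have hsol := h x (fun _ => u₀) continuous_const (fun t _ => hx' t) 0 le_rfl
  have hchain := ((hH (x 0)).hasFDerivAt.comp_hasDerivAt 0 (hx' 0)).unique hsol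
  rwa [hx₀] at hchain

theorem CarriesSolutions.toMatrix'_fderiv_mul_eq (h : CarriesSolutions A₁ B₁ A₂ B₂ H G)
    (hH : ContDiff ℝ 1 H) (hGx : DifferentiableAt ℝ (fun x => G x 0) 0)
    (hGu : DifferentiableAt ℝ (G 0) 0) :
    LinearMap.toMatrix' (fderiv ℝ H 0 : (Fin n → ℝ) →ₗ[ℝ] (Fin n → ℝ)) * A₁
        = A₂ * LinearMap.toMatrix' (fderiv ℝ H 0 : (Fin n → ℝ) →ₗ[ℝ] (Fin n → ℝ))
          + B₂ * LinearMap.toMatrix'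
            (fderiv ℝ (fun x => G x 0) 0 : (Fin n → ℝ) →ₗ[ℝ] (Fin m → ℝ)) ∧
      LinearMap.toMatrix' (fderiv ℝ H 0 : (Fin n → ℝ) →ₗ[ℝ] (Fin n → ℝ)) * B₁
        = B₂ * LinearMap.toMatrix' (fderiv ℝ (G 0) 0 : (Fin m → ℝ) →ₗ[ℝ] (Fin m → ℝ)) := by
  have hrel : ∀ x u, fderiv ℝ H x (LinearMap.toContinuousLinearMap (toLin' A₁) x
      + LinearMap.toContinuousLinearMap (toLin' B₁) u)
      = LinearMap.toContinuousLinearMap (toLin' A₂) (H x)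
        + LinearMap.toContinuousLinearMap (toLin' B₂) (G x u) := by
    simpa using h.fderiv_apply_eq (hH.differentiable one_ne_zero)
  have hA := congrArg (fun T : (Fin n → ℝ) →L[ℝ] (Fin n → ℝ) =>
      LinearMap.toMatrix' (T : (Fin n → ℝ) →ₗ[ℝ] (Fin n → ℝ)))
    (fderiv_comp_drift_eq_of_forall_fderiv_apply_eq hrel hH.contDiffAt hGx)
  have hB := congrArg (fun T : (Fin m → ℝ) →L[ℝ] (Fin n → ℝ) =>
      LinearMap.toMatrix' (T : (Fin m → ℝ) →ₗ[ℝ] (Fin n → ℝ)))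
    (fderiv_comp_input_eq_of_forall_fderiv_apply_eq hrel hGu)
  simp only [ContinuousLinearMap.toLinearMap_comp, ContinuousLinearMap.toLinearMap_add,
    LinearMap.toMatrix'_comp, map_add, LinearMap.coe_toContinuousLinearMap,
    LinearMap.toMatrix'_toLin'] at hA hB
  exact ⟨hA, hB⟩

end LinearControlSystem

theorem stmt_10_general (n m : ℕ)
    (A₁ A₂ : Matrix (Fin n) (Fin n) ℝ) (B₁ B₂ : Matrix (Fin n) (Fin m) ℝ)
    (H : (Fin n → ℝ) → (Fin n → ℝ))
    (G : (Fin n → ℝ) → (Fin m → ℝ) → (Fin m → ℝ))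
    (hF : ContDiff ℝ 1 (fun p : (Fin n → ℝ) × (Fin m → ℝ) => (H p.1, G p.1 p.2)))
    (hdiffeo : ∃ Finv : (Fin n → ℝ) × (Fin m → ℝ) → (Fin n → ℝ) × (Fin m → ℝ),
      ContDiff ℝ 1 Finv ∧
      Function.LeftInverse Finv (fun p : (Fin n → ℝ) × (Fin m → ℝ) => (H p.1, G p.1 p.2)) ∧
      Function.RightInverse Finv (fun p : (Fin n → ℝ) × (Fin m → ℝ) => (H p.1, G p.1 p.2)))
    (htrans : ∀ (x : ℝ → Fin n → ℝ) (u : ℝ → Fin m → ℝ), Continuous u →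
      (∀ t : ℝ, 0 ≤ t → HasDerivAt x (A₁.mulVec (x t) + B₁.mulVec (u t)) t) →
      ∀ t : ℝ, 0 ≤ t →
        HasDerivAt (fun s => H (x s))
          (A₂.mulVec (H (x t)) + B₂.mulVec (G (x t) (u t))) t) :
    (∃ (O : Matrix (Fin n) (Fin n) ℝ) (Q : Matrix (Fin m) (Fin m) ℝ)
        (L : Matrix (Fin m) (Fin n) ℝ),
      IsUnit O ∧ IsUnit Q ∧
      A₂ = O⁻¹ * A₁ * O + O⁻¹ * B₁ * L ∧ B₂ = O⁻¹ * B₁ * Q) ∧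
    (letI DH : Matrix (Fin n) (Fin n) ℝ :=
        LinearMap.toMatrix' (fderiv ℝ H 0 : (Fin n → ℝ) →ₗ[ℝ] (Fin n → ℝ))
     letI Gx : Matrix (Fin m) (Fin n) ℝ :=
        LinearMap.toMatrix' (fderiv ℝ (fun x => G x 0) 0 : (Fin n → ℝ) →ₗ[ℝ] (Fin m → ℝ))
     letI Gu : Matrix (Fin m) (Fin m) ℝ :=
        LinearMap.toMatrix' (fderiv ℝ (fun v => G 0 v) 0 : (Fin m → ℝ) →ₗ[ℝ] (Fin m → ℝ))
     A₁ = DH⁻¹ * A₂ * DH + DH⁻¹ * B₂ * Gx ∧ B₁ = DH⁻¹ * B₂ * Gu) := by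
  obtain ⟨Finv, hFinv, hl, hr⟩ := hdiffeo
  have hH : ContDiff ℝ 1 H :=
    contDiff_fst.comp (hF.comp (contDiff_id.prodMk (contDiff_const (c := (0 : Fin m → ℝ)))))
  have hGd : Differentiable ℝ (fun p : (Fin n → ℝ) × (Fin m → ℝ) => G p.1 p.2) :=
    (contDiff_snd.comp hF).differentiable one_ne_zero
  have hGx : DifferentiableAt ℝ (fun x => G x 0) 0 :=
    (hGd _).comp 0 (differentiableAt_id.prodMk (differentiableAt_const _))
  have hGu : DifferentiableAt ℝ (G 0) 0 :=
    (hGd _).comp 0 ((differentiableAt_const _).prodMk differentiableAt_id)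
  obtain ⟨hDH, hDGu⟩ := bijective_fderiv_of_bijective_fderiv_prodMk
    (hH.differentiable one_ne_zero 0) (hGd _) (bijective_fderiv_of_leftInverse_of_rightInverse
      (hF.differentiable one_ne_zero _) (hFinv.differentiable one_ne_zero _) hl hr)
  have hunit {k : ℕ} {f : (Fin k → ℝ) →L[ℝ] (Fin k → ℝ)} (hf : Bijective f) :
      IsUnit (LinearMap.toMatrix' (f : (Fin k → ℝ) →ₗ[ℝ] (Fin k → ℝ))) :=
    LinearMap.isUnit_toMatrix'_iff.2 ((Module.End.isUnit_iff _).2 hf)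
  obtain ⟨hA, hB⟩ := CarriesSolutions.toMatrix'_fderiv_mul_eq htrans hH hGx hGu
  exact ⟨exists_feedback_of_mul_eq (hunit hDH) (hunit hDGu) hA hB,
    eq_inv_mul_of_mul_eq (hunit hDH) hA hB⟩

/-- differential equivalence implies linear (feedback) equivalence for
linear controlled systems; moreover the explicit relations via `D_xH(0)`, `D_xG(0,0)`,
`D_uG(0,0)` hold. -/
theorem stmt_10 (n m : ℕ)
    (A₁ A₂ : Matrix (Fin n) (Fin n) ℝ) (B₁ B₂ : Matrix (Fin n) (Fin m) ℝ)
    (H : (Fin n → ℝ) → (Fin n → ℝ))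
    (G : (Fin n → ℝ) → (Fin m → ℝ) → (Fin m → ℝ))
    (hF : ContDiff ℝ 1 (fun p : (Fin n → ℝ) × (Fin m → ℝ) => (H p.1, G p.1 p.2)))
    (hdiffeo : ∃ Finv : (Fin n → ℝ) × (Fin m → ℝ) → (Fin n → ℝ) × (Fin m → ℝ),
      ContDiff ℝ 1 Finv ∧
      Function.LeftInverse Finv (fun p : (Fin n → ℝ) × (Fin m → ℝ) => (H p.1, G p.1 p.2)) ∧
      Function.RightInverse Finv (fun p : (Fin n → ℝ) × (Fin m → ℝ) => (H p.1, G p.1 p.2)))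
    (hH0 : H 0 = 0) (hG0 : G 0 0 = 0)
    (htrans : ∀ (x : ℝ → Fin n → ℝ) (u : ℝ → Fin m → ℝ), Continuous u →
      (∀ t : ℝ, 0 ≤ t → HasDerivAt x (A₁.mulVec (x t) + B₁.mulVec (u t)) t) →
      ∀ t : ℝ, 0 ≤ t →
        HasDerivAt (fun s => H (x s))
          (A₂.mulVec (H (x t)) + B₂.mulVec (G (x t) (u t))) t) :
    (∃ (O : Matrix (Fin n) (Fin n) ℝ) (Q : Matrix (Fin m) (Fin m) ℝ)
        (L : Matrix (Fin m) (Fin n) ℝ),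
      IsUnit O ∧ IsUnit Q ∧
      A₂ = O⁻¹ * A₁ * O + O⁻¹ * B₁ * L ∧ B₂ = O⁻¹ * B₁ * Q) ∧
    (letI DH : Matrix (Fin n) (Fin n) ℝ :=
        LinearMap.toMatrix' (fderiv ℝ H 0 : (Fin n → ℝ) →ₗ[ℝ] (Fin n → ℝ))
     letI Gx : Matrix (Fin m) (Fin n) ℝ :=
        LinearMap.toMatrix' (fderiv ℝ (fun x => G x 0) 0 : (Fin n → ℝ) →ₗ[ℝ] (Fin m → ℝ))
     letI Gu : Matrix (Fin m) (Fin m) ℝ :=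
        LinearMap.toMatrix' (fderiv ℝ (fun v => G 0 v) 0 : (Fin m → ℝ) →ₗ[ℝ] (Fin m → ℝ))
     A₁ = DH⁻¹ * A₂ * DH + DH⁻¹ * B₂ * Gx ∧ B₁ = DH⁻¹ * B₂ * Gu) :=
  stmt_10_general n m A₁ A₂ B₁ B₂ H G hF hdiffeo htrans
end

section
/- Suppose a homeomorphism F(x,u) = (H(x,u), G(x,u)) of ℝⁿ×ℝᵐ transports solution-control pairs of ẋ = A₁x + B₁u to those of ẏ = A₂y + B₂v (for continuous controls), and G maps bounded sets to bounded sets, and H, together with the first component Z of F⁻¹, is continuous in its first variable. Then H(x,u) does not depend on u: H(x,u) = H(x,u′) for all x ∈ ℝⁿ and u, u′ ∈ ℝᵐ; moreover x ↦ H(x,0) is a homeomorphism of ℝⁿ. -/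
/-!
Steer the control linearly from `u₀` to `u₁` during a short time `ε`, starting from the state `x₀`.
By Grönwall's inequality the state stays within `o(1)` of `x₀` on `[0, ε]`; as `G` is bounded on
bounded sets, the forcing term of the transported trajectory `H(x(t), u(t))` is bounded too, so
this trajectory also moves by `o(1)`. Its endpoint `H(x(ε), u₁)` therefore tends both to
`H(x₀, u₁)` (continuity of `H` in the state) and to `H(x₀, u₀)`. Applied to `F⁻¹`, the same
argument shows that `Z` does not depend on the control, and then `x ↦ H(x, 0)` and `y ↦ Z(y, 0)`
are mutually inverse.
-/

open Set Filter Topology NormedSpace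

section LinearODE

variable {E : Type*} [NormedAddCommGroup E] [NormedSpace ℝ E]

theorem exp_smul_mul_exp_neg_smul [CompleteSpace E] (A : E →L[ℝ] E) (t : ℝ) :
    exp (t • A) * exp ((-t) • A) = 1 := by
  -- `exp_add_of_commute` is stated over `ℚ`-algebras
  let : NormedAlgebra ℚ (E →L[ℝ] E) := .restrictScalars ℚ ℝ _
  rw [← exp_add_of_commute ((Commute.refl A).smul_left t |>.smul_right (-t)), ← add_smul,
    add_neg_cancel, zero_smul, exp_zero]

noncomputable def linearSolution (A : E →L[ℝ] E) (f : ℝ → E) (x₀ : E) (t : ℝ) : E :=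
  exp (t • A) (x₀ + ∫ s in (0 : ℝ)..t, exp ((-s) • A) (f s))

theorem linearSolution_zero (A : E →L[ℝ] E) (f : ℝ → E) (x₀ : E) :
    linearSolution A f x₀ 0 = x₀ := by
  simp [linearSolution]

theorem hasDerivAt_linearSolution [CompleteSpace E] (A : E →L[ℝ] E) {f : ℝ → E}
    (hf : Continuous f) (x₀ : E) (t : ℝ) :
    HasDerivAt (linearSolution A f x₀) (A (linearSolution A f x₀ t) + f t) t := by
  have hint : Continuous fun s : ℝ => exp ((-s) • A) (f s) :=
    ((differentiable_exp_smul_const ℝ A).continuous.comp continuous_neg).clm_apply hf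
  have hprim : HasDerivAt (fun t => x₀ + ∫ s in (0 : ℝ)..t, exp ((-s) • A) (f s))
      (exp ((-t) • A) (f t)) t :=
    (intervalIntegral.integral_hasDerivAt_right (hint.intervalIntegrable _ _)
      (hint.stronglyMeasurableAtFilter _ _) hint.continuousAt).const_add x₀
  refine ((hasDerivAt_exp_smul_const' A t).clm_apply hprim).congr_deriv ?_
  rw [← mul_apply_eq_comp (exp (t • A)), exp_smul_mul_exp_neg_smul, one_apply_eq_self]
  rfl

theorem norm_sub_le_gronwallBound_of_linearODE {A : E →L[ℝ] E} {y w : ℝ → E} {T C : ℝ}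
    (hy : ∀ t ∈ Icc 0 T, HasDerivAt y (A (y t) + w t) t) (hw : ∀ t ∈ Icc 0 T, ‖w t‖ ≤ C) :
    ∀ t ∈ Icc 0 T, ‖y t - y 0‖ ≤ gronwallBound 0 ‖A‖ (‖A‖ * ‖y 0‖ + C) t := by
  have hderiv : ∀ t ∈ Icc 0 T, HasDerivAt (fun s => y s - y 0) (A (y t) + w t) t :=
    fun t ht => (hy t ht).sub_const (y 0)
  have hgronwall := norm_le_gronwallBound_of_norm_deriv_right_le (δ := 0)
    (fun t ht => (hderiv t ht).continuousAt.continuousWithinAt)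
    (fun t ht => (hderiv t (Ico_subset_Icc_self ht)).hasDerivWithinAt) (by simp)
    fun t ht => by
      have hyt : ‖y t‖ ≤ ‖y t - y 0‖ + ‖y 0‖ := norm_le_norm_sub_add (y t) (y 0)
      calc ‖A (y t) + w t‖ ≤ ‖A‖ * ‖y t‖ + C :=
            (norm_add_le _ _).trans (add_le_add (A.le_opNorm _) (hw t (Ico_subset_Icc_self ht)))
        _ ≤ ‖A‖ * ‖y t - y 0‖ + (‖A‖ * ‖y 0‖ + C) := by nlinarith [norm_nonneg A]
  simpa using hgronwall

end LinearODE

theorem tendsto_nhdsGT_of_norm_sub_le_gronwallBound {E : Type*} [NormedAddCommGroup E]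
    {f : ℝ → E} {a : E} {K c : ℝ}
    (hf : ∀ᶠ ε in 𝓝[>] 0, ‖f ε - a‖ ≤ gronwallBound 0 K c ε) : Tendsto f (𝓝[>] 0) (𝓝 a) := by
  have hbound : Tendsto (gronwallBound 0 K c) (𝓝 0) (𝓝 0) := by
    simpa only [gronwallBound_x0] using (hasDerivAt_gronwallBound 0 K c 0).continuousAt.tendsto
  exact tendsto_iff_norm_sub_tendsto_zero.2 <|
    squeeze_zero_norm' (by simpa using hf) (hbound.mono_left nhdsWithin_le_nhds)

section Transport

variable {E U E' U' : Type*} [NormedAddCommGroup E] [NormedSpace ℝ E]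
  [NormedAddCommGroup U] [NormedSpace ℝ U] [NormedAddCommGroup E'] [NormedSpace ℝ E']
  [NormedAddCommGroup U'] [NormedSpace ℝ U']

def TransportsSolutions (A₁ : E →L[ℝ] E) (B₁ : U →L[ℝ] E) (A₂ : E' →L[ℝ] E') (B₂ : U' →L[ℝ] E')
    (H : E → U → E') (G : E → U → U') : Prop :=
  ∀ (x : ℝ → E) (u : ℝ → U), Continuous u →
    (∀ t : ℝ, 0 ≤ t → HasDerivAt x (A₁ (x t) + B₁ (u t)) t) →
    ∀ t : ℝ, 0 ≤ t →
      HasDerivAt (fun s => H (x s) (u s)) (A₂ (H (x t) (u t)) + B₂ (G (x t) (u t))) t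

theorem norm_add_div_smul_sub_le (u₀ u₁ : U) {t ε : ℝ} (ht : t ∈ Icc 0 ε) :
    ‖u₀ + (t / ε) • (u₁ - u₀)‖ ≤ ‖u₀‖ + ‖u₁ - u₀‖ := by
  have hc : ‖t / ε‖ ≤ 1 := by
    rw [Real.norm_of_nonneg (div_nonneg ht.1 (ht.1.trans ht.2))]
    exact div_le_one_of_le₀ ht.2 (ht.1.trans ht.2)
  calc ‖u₀ + (t / ε) • (u₁ - u₀)‖ ≤ ‖u₀‖ + ‖t / ε‖ * ‖u₁ - u₀‖ :=
        (norm_add_le _ _).trans_eq (by rw [norm_smul])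
    _ ≤ ‖u₀‖ + ‖u₁ - u₀‖ := by gcongr; exact mul_le_of_le_one_left (norm_nonneg _) hc

theorem TransportsSolutions.apply_eq_apply [CompleteSpace E] {A₁ : E →L[ℝ] E} {B₁ : U →L[ℝ] E}
    {A₂ : E' →L[ℝ] E'} {B₂ : U' →L[ℝ] E'} {H : E → U → E'} {G : E → U → U'}
    (htrans : TransportsSolutions A₁ B₁ A₂ B₂ H G) (hH : ∀ u, Continuous fun x => H x u)
    (hG : ∀ s : Set (E × U), Bornology.IsBounded s →
      Bornology.IsBounded ((fun p : E × U => G p.1 p.2) '' s))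
    (x₀ : E) (u₀ u₁ : U) : H x₀ u₁ = H x₀ u₀ := by
  set R := ‖u₀‖ + ‖u₁ - u₀‖
  let u : ℝ → ℝ → U := fun ε t => u₀ + (t / ε) • (u₁ - u₀)
  let x : ℝ → ℝ → E := fun ε => linearSolution A₁ (fun t => B₁ (u ε t)) x₀
  have hu : ∀ ε, Continuous (u ε) := fun ε => by fun_prop
  have hx : ∀ ε t, HasDerivAt (x ε) (A₁ (x ε t) + B₁ (u ε t)) t := fun ε =>
    hasDerivAt_linearSolution A₁ (B₁.continuous.comp (hu ε)) x₀
  set g₁ := gronwallBound 0 ‖A₁‖ (‖A₁‖ * ‖x₀‖ + ‖B₁‖ * R)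
  have hx_near : ∀ ε, ∀ t ∈ Icc 0 ε, ‖x ε t - x₀‖ ≤ g₁ t := by
    intro ε
    simpa [x, linearSolution_zero] using norm_sub_le_gronwallBound_of_linearODE (T := ε)
      (fun t _ => hx ε t) fun t ht =>
        (B₁.le_opNorm _).trans (by gcongr; exact norm_add_div_smul_sub_le u₀ u₁ ht)
  obtain ⟨C, hC⟩ := isBounded_iff_forall_norm_le.1
    (hG _ ((Metric.isBounded_closedBall (x := x₀) (r := g₁ 1)).prod
      (Metric.isBounded_closedBall (x := (0 : U)) (r := R))))
  set g₂ := gronwallBound 0 ‖A₂‖ (‖A₂‖ * ‖H x₀ u₀‖ + ‖B₂‖ * C)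
  have hy_near : ∀ ε ∈ Ioc 0 1, ‖H (x ε ε) u₁ - H x₀ u₀‖ ≤ g₂ ε := by
    rintro ε ⟨hε, hε1⟩
    have hG_le : ∀ t ∈ Icc 0 ε, ‖G (x ε t) (u ε t)‖ ≤ C := by
      refine fun t ht => hC _ ⟨(x ε t, u ε t), ⟨?_, ?_⟩, rfl⟩
      · rw [Metric.mem_closedBall, dist_eq_norm]
        exact (hx_near ε t ht).trans
          (gronwallBound_mono le_rfl (by positivity) (norm_nonneg _) (ht.2.trans hε1))
      · simpa using norm_add_div_smul_sub_le u₀ u₁ ht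
    have hu_end : u ε ε = u₁ := by simp [u, div_self hε.ne']
    simpa [x, u, linearSolution_zero, hu_end] using
      norm_sub_le_gronwallBound_of_linearODE (T := ε) (y := fun s => H (x ε s) (u ε s))
        (fun t ht => htrans (x ε) (u ε) (hu ε) (fun s _ => hx ε s) t ht.1)
        (fun t ht => (B₂.le_opNorm _).trans (by gcongr; exact hG_le t ht)) ε ⟨hε.le, le_rfl⟩
  have hx_lim : Tendsto (fun ε => x ε ε) (𝓝[>] 0) (𝓝 x₀) :=
    tendsto_nhdsGT_of_norm_sub_le_gronwallBound <|
      eventually_nhdsWithin_of_forall fun ε hε => hx_near ε ε ⟨le_of_lt hε, le_rfl⟩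
  have hy_lim : Tendsto (fun ε => H (x ε ε) u₁) (𝓝[>] 0) (𝓝 (H x₀ u₀)) :=
    tendsto_nhdsGT_of_norm_sub_le_gronwallBound <|
      eventually_of_mem (Ioc_mem_nhdsGT one_pos) hy_near
  exact tendsto_nhds_unique (((hH u₁).tendsto x₀).comp hx_lim) hy_lim

end Transport

theorem Bornology.IsBounded.image_of_continuous {α β : Type*} [PseudoMetricSpace α] [ProperSpace α]
    [PseudoMetricSpace β] {f : α → β} (hf : Continuous f) {s : Set α} (hs : IsBounded s) :
    IsBounded (f '' s) :=
  ((hs.isCompact_closure).image hf).isBounded.subset (image_mono subset_closure)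

theorem Homeomorph.isHomeomorph_fst_of_fst_indep {X U Y V : Type*} [TopologicalSpace X]
    [TopologicalSpace U] [TopologicalSpace Y] [TopologicalSpace V] (F : X × U ≃ₜ Y × V)
    (hF : ∀ x u u', (F (x, u)).1 = (F (x, u')).1)
    (hF' : ∀ y v v', (F.symm (y, v)).1 = (F.symm (y, v')).1) (u₀ : U) (v₀ : V) :
    IsHomeomorph fun x => (F (x, u₀)).1 := by
  refine isHomeomorph_iff_exists_inverse.2
    ⟨by fun_prop, fun y => (F.symm (y, v₀)).1, fun x => ?_, fun y => ?_, by fun_prop⟩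
  · dsimp only
    rw [hF' _ v₀ (F (x, u₀)).2, Prod.mk.eta, F.symm_apply_apply]
  · dsimp only
    rw [hF _ u₀ (F.symm (y, v₀)).2, Prod.mk.eta, F.apply_symm_apply]

/-- Proposition 1.1: if a homeomorphism `F(x,u) = (H(x,u), G(x,u))` of
`ℝⁿ × ℝᵐ` transports solution-control pairs of `ẋ = A₁x + B₁u` to those of
`ẏ = A₂y + B₂v` (and symmetrically for `F⁻¹`), `G` maps bounded sets to bounded sets,
and `H` and the first component `Z` of `F⁻¹` are continuous in their first variable,
then `H` does not depend on `u`, and `x ↦ H(x,0)` is a homeomorphism of `ℝⁿ`. -/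
theorem stmt_19 (n m : ℕ)
    (A₁ A₂ : Matrix (Fin n) (Fin n) ℝ) (B₁ B₂ : Matrix (Fin n) (Fin m) ℝ)
    (H : (Fin n → ℝ) → (Fin m → ℝ) → (Fin n → ℝ))
    (G : (Fin n → ℝ) → (Fin m → ℝ) → (Fin m → ℝ))
    (F : ((Fin n → ℝ) × (Fin m → ℝ)) ≃ₜ ((Fin n → ℝ) × (Fin m → ℝ)))
    (hF : ∀ p : (Fin n → ℝ) × (Fin m → ℝ), F p = (H p.1 p.2, G p.1 p.2))
    (htrans : ∀ (x : ℝ → Fin n → ℝ) (u : ℝ → Fin m → ℝ), Continuous u →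
      (∀ t : ℝ, 0 ≤ t → HasDerivAt x (A₁.mulVec (x t) + B₁.mulVec (u t)) t) →
      ∀ t : ℝ, 0 ≤ t →
        HasDerivAt (fun s => H (x s) (u s))
          (A₂.mulVec (H (x t) (u t)) + B₂.mulVec (G (x t) (u t))) t)
    (htrans' : ∀ (y : ℝ → Fin n → ℝ) (v : ℝ → Fin m → ℝ), Continuous v →
      (∀ t : ℝ, 0 ≤ t → HasDerivAt y (A₂.mulVec (y t) + B₂.mulVec (v t)) t) →
      ∀ t : ℝ, 0 ≤ t →
        HasDerivAt (fun s => (F.symm (y s, v s)).1)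
          (A₁.mulVec ((F.symm (y t, v t)).1) +
            B₁.mulVec ((F.symm (y t, v t)).2)) t)
    (hGbdd : ∀ s : Set ((Fin n → ℝ) × (Fin m → ℝ)), Bornology.IsBounded s →
      Bornology.IsBounded ((fun p : (Fin n → ℝ) × (Fin m → ℝ) => G p.1 p.2) '' s))
    (hHcont : ∀ u : Fin m → ℝ, Continuous fun x => H x u)
    (hZcont : ∀ v : Fin m → ℝ, Continuous fun y => (F.symm (y, v)).1) :
    (∀ (x : Fin n → ℝ) (u u' : Fin m → ℝ), H x u = H x u') ∧
    IsHomeomorph (fun x : Fin n → ℝ => H x 0) := by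
  let L {k l : ℕ} (M : Matrix (Fin k) (Fin l) ℝ) : (Fin l → ℝ) →L[ℝ] (Fin k → ℝ) :=
    (Matrix.toLin' M).toContinuousLinearMap
  have hH_trans : TransportsSolutions (L A₁) (L B₁) (L A₂) (L B₂) H G := htrans
  have hZ_trans : TransportsSolutions (L A₂) (L B₂) (L A₁) (L B₁)
      (fun y v => (F.symm (y, v)).1) (fun y v => (F.symm (y, v)).2) := htrans'
  have hH_indep : ∀ x u u', H x u = H x u' := fun x u u' =>
    hH_trans.apply_eq_apply hHcont hGbdd x u' u
  have hW_bdd : ∀ s : Set ((Fin n → ℝ) × (Fin m → ℝ)), Bornology.IsBounded s →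
      Bornology.IsBounded ((fun p : (Fin n → ℝ) × (Fin m → ℝ) => (F.symm (p.1, p.2)).2) '' s) :=
    fun s hs => hs.image_of_continuous (by simpa using F.symm.continuous.snd)
  have hZ_indep : ∀ y v v', (F.symm (y, v)).1 = (F.symm (y, v')).1 := fun y v v' =>
    hZ_trans.apply_eq_apply hZcont hW_bdd y v' v
  have hH_eq : (fun x => H x 0) = fun x => (F (x, 0)).1 := funext fun x => by rw [hF]
  refine ⟨hH_indep, hH_eq ▸ F.isHomeomorph_fst_of_fst_indep (fun x u u' => ?_) hZ_indep 0 0⟩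
  simp only [hF]
  exact hH_indep x u u'
end
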